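/- arXiv:2009.13428 — 2 statements merged into one kernel-verified Lean document; each statement's English description precedes it below -/
import Mathlib

section
/- Under the setup of the sequential multivariate phase-type density f(y₁,…,yₙ) = α·exp(A₁y₁)·D₁ ⋯ exp(Aₙyₙ)·Dₙ·𝟏, the joint Laplace transform satisfies ∫₀^∞⋯∫₀^∞ e^{−θ₁y₁−⋯−θₙyₙ} f(y₁,…,yₙ) dy₁⋯dyₙ = α·(θ₁I−A₁)^{−1}D₁·(θ₂I−A₂)^{−1}D₂ ⋯ (θₙI−Aₙ)^{−1}Dₙ·𝟏 for all θ₁,…,θₙ ≥ 0. -/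
open Matrix MeasureTheory Filter

/-- Iterated left-multiplication of a row vector by a chain of (rectangular) step
matrices `M 0, M 1, …`, yielding a row vector at every intermediate position. -/
noncomputable def chainRow {n : ℕ} (d : Fin (n + 1) → ℕ)
    (M : (k : Fin n) → Matrix (Fin (d k.castSucc)) (Fin (d k.succ)) ℝ)
    (v0 : Fin (d 0) → ℝ) : (k : Fin (n + 1)) → Fin (d k) → ℝ :=
  Fin.induction v0 (fun k ih => ih ᵥ* M k)

open Set Topology

/-!
With `B_k = A_k - θ_k I` one has `exp(t B_k) = e^{-θ_k t} exp(t A_k)`, so the weight `e^{-θ·y}`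
distributes over the chain and the integrand becomes `α M_0(y_0) ⋯ M_n(y_n) 𝟏` with
`M_k(t) = exp(t B_k) D_k`. Each factor depends on its own variable, so Fubini, peeling off one
coordinate at a time, turns the integral of the product into the product of the entrywise
integrals `∫₀^∞ M_k`. For a single factor, `exp(t B)` has derivative `exp(t B) B` and tends to `0`,
whence `(∫₀^∞ exp(t B) dt) B = -I`. The entries are integrable because those of `exp(t A)` are
nonnegative with the bounded antiderivative `exp(t A) A⁻¹`, and `e^{-θ t} ≤ 1`.
-/

section ChainProd
variable {m : ℕ} (d : Fin (m + 1) → ℕ)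

def chainProd (M : (k : Fin m) → Matrix (Fin (d k.castSucc)) (Fin (d k.succ)) ℝ) :
    (k : Fin (m + 1)) → Matrix (Fin (d 0)) (Fin (d k)) ℝ :=
  Fin.induction 1 fun k P => P * M k

variable (M : (k : Fin m) → Matrix (Fin (d k.castSucc)) (Fin (d k.succ)) ℝ)

@[simp] lemma chainProd_zero : chainProd d M 0 = 1 := rfl

@[simp] lemma chainProd_succ (k : Fin m) :
    chainProd d M k.succ = chainProd d M k.castSucc * M k := by
  simp [chainProd]

lemma chainRow_succ (v : Fin (d 0) → ℝ) (k : Fin m) :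
    chainRow d M v k.succ = chainRow d M v k.castSucc ᵥ* M k := by
  simp [chainRow]

lemma chainRow_eq_vecMul_chainProd (v : Fin (d 0) → ℝ) (k : Fin (m + 1)) :
    chainRow d M v k = v ᵥ* chainProd d M k := by
  induction k using Fin.induction with
  | zero => simp [chainRow]
  | succ k ih => rw [chainRow_succ, ih, vecMul_vecMul, chainProd_succ]

end ChainProd

section ChainProdSucc
variable {m : ℕ} (d : Fin (m + 2) → ℕ)
  (M : (k : Fin (m + 1)) → Matrix (Fin (d k.castSucc)) (Fin (d k.succ)) ℝ)

lemma chainProd_succ_eq_mul (k : Fin (m + 1)) :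
    chainProd d M k.succ = M 0 * chainProd (fun k => d k.succ) (fun k => M k.succ) k := by
  induction k using Fin.induction with
  | zero => rw [chainProd_succ]; exact (Matrix.one_mul _).trans (Matrix.mul_one _).symm
  | succ k ih =>
    rw [chainProd_succ, chainProd_succ, ← Matrix.mul_assoc, ← ih]
    rfl

lemma chainProd_last_succ :
    chainProd d M (Fin.last (m + 1))
      = M 0 * chainProd (fun k => d k.succ) (fun k => M k.succ) (Fin.last m) :=
  chainProd_succ_eq_mul d M (Fin.last m)

lemma chainProd_last_succ_apply (i : Fin (d 0)) (j : Fin (d (Fin.last (m + 1)))) :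
    chainProd d M (Fin.last (m + 1)) i j
      = ∑ l, M 0 i l * chainProd (fun k => d k.succ) (fun k => M k.succ) (Fin.last m) l j :=
  (congrFun₂ (chainProd_last_succ d M) i j).trans Matrix.mul_apply

end ChainProdSucc

lemma chainProd_last_smul {m : ℕ} (d : Fin (m + 1) → ℕ)
    (M : (k : Fin m) → Matrix (Fin (d k.castSucc)) (Fin (d k.succ)) ℝ) (c : Fin m → ℝ) :
    chainProd d (fun k => c k • M k) (Fin.last m)
      = (∏ k, c k) • chainProd d M (Fin.last m) := by
  induction m with
  | zero => simp [Fin.last]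
  | succ m ih =>
    rw [chainProd_last_succ, chainProd_last_succ, ih, Fin.prod_univ_succ,
      Matrix.smul_mul, Matrix.mul_smul, smul_smul]
    rfl

section PiFinCons
variable {X E : Type*} [MeasurableSpace X] [NormedAddCommGroup E] {m : ℕ}
  (μ : Fin (m + 1) → Measure X) [∀ k, SigmaFinite (μ k)]

lemma piFinSuccAbove_zero_symm_eq_cons :
    ⇑(MeasurableEquiv.piFinSuccAbove (fun _ : Fin (m + 1) => X) 0).symm
      = fun z => Fin.cons z.1 z.2 := by
  funext z
  simp [MeasurableEquiv.piFinSuccAbove_symm_apply, Fin.insertNthEquiv, Fin.insertNth_zero']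

lemma integrable_pi_iff_integrable_prod_cons {G : (Fin (m + 1) → X) → E} :
    Integrable G (Measure.pi μ) ↔ Integrable (fun z : X × (Fin m → X) => G (Fin.cons z.1 z.2))
      ((μ 0).prod (Measure.pi fun k => μ k.succ)) := by
  have h := (measurePreserving_piFinSuccAbove μ 0).symm
  rw [← h.integrable_comp_emb (MeasurableEquiv.measurableEmbedding _),
    piFinSuccAbove_zero_symm_eq_cons]
  simp [Function.comp_def, Fin.zero_succAbove]

lemma integral_pi_eq_integral_prod_cons [NormedSpace ℝ E] (G : (Fin (m + 1) → X) → E) :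
    ∫ y, G y ∂Measure.pi μ = ∫ z : X × (Fin m → X), G (Fin.cons z.1 z.2)
      ∂(μ 0).prod (Measure.pi fun k => μ k.succ) := by
  have h := (measurePreserving_piFinSuccAbove μ 0).symm
  rw [← h.integral_comp', piFinSuccAbove_zero_symm_eq_cons]
  simp [Fin.zero_succAbove]

end PiFinCons

section EntryIntegral
variable {X : Type*} [MeasurableSpace X] {μ : Measure X} {ι κ ν : Type*} [Fintype κ]

def EntryIntegrable (F : X → Matrix ι κ ℝ) (μ : Measure X) : Prop :=
  ∀ i j, Integrable (fun x => F x i j) μ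

noncomputable def entryIntegral (F : X → Matrix ι κ ℝ) (μ : Measure X) : Matrix ι κ ℝ :=
  Matrix.of fun i j => ∫ x, F x i j ∂μ

variable {F : X → Matrix ι κ ℝ}

lemma EntryIntegrable.mul_const (hF : EntryIntegrable F μ) (D : Matrix κ ν ℝ) :
    EntryIntegrable (fun x => F x * D) μ := fun i j => by
  simp only [mul_apply]
  exact integrable_finsetSum _ fun l _ => (hF i l).mul_const _

lemma entryIntegral_mul_const (hF : EntryIntegrable F μ) (D : Matrix κ ν ℝ) :
    entryIntegral (fun x => F x * D) μ = entryIntegral F μ * D := by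
  ext i j
  simp only [entryIntegral, of_apply, mul_apply]
  rw [integral_finsetSum _ fun l _ => (hF i l).mul_const _]
  simp only [integral_mul_const]

lemma integral_vecMul_dotProduct [Fintype ι] (hF : EntryIntegrable F μ) (v : ι → ℝ)
    (w : κ → ℝ) :
    ∫ x, (v ᵥ* F x) ⬝ᵥ w ∂μ = (v ᵥ* entryIntegral F μ) ⬝ᵥ w := by
  have hexpand (G : Matrix ι κ ℝ) : (v ᵥ* G) ⬝ᵥ w = ∑ i, ∑ j, v i * G i j * w j := by
    simp only [dotProduct, vecMul, Finset.sum_mul]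
    exact Finset.sum_comm
  simp only [hexpand]
  rw [integral_finsetSum _ fun i _ => integrable_finsetSum _ fun j _ =>
    ((hF i j).const_mul (v i)).mul_const (w j)]
  refine Finset.sum_congr rfl fun i _ => ?_
  rw [integral_finsetSum _ fun j _ => ((hF i j).const_mul (v i)).mul_const (w j)]
  simp only [integral_mul_const, integral_const_mul, entryIntegral, of_apply]

end EntryIntegral

section ChainIntegral
variable {X : Type*} [MeasurableSpace X] {m : ℕ} (d : Fin (m + 1) → ℕ)
  (M : (k : Fin m) → X → Matrix (Fin (d k.castSucc)) (Fin (d k.succ)) ℝ)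
  (μ : Fin m → Measure X) [∀ k, SigmaFinite (μ k)]

lemma entryIntegrable_chainProd (hM : ∀ k, EntryIntegrable (M k) (μ k)) :
    EntryIntegrable (fun y => chainProd d (fun k => M k (y k)) (Fin.last m)) (Measure.pi μ) := by
  induction m with
  | zero =>
    have : ∀ k, IsProbabilityMeasure (μ k) := fun k => k.elim0
    exact fun i j => integrable_const _
  | succ m ih =>
    intro i j
    have htail := ih (fun k => d k.succ) (fun k => M k.succ) (fun k => μ k.succ) fun k => hM k.succ
    rw [integrable_pi_iff_integrable_prod_cons]
    simp only [chainProd_last_succ_apply, Fin.cons_zero, Fin.cons_succ]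
    exact integrable_finsetSum _ fun l _ => (hM 0 i l).mul_prod (htail l j)

lemma entryIntegral_chainProd (hM : ∀ k, EntryIntegrable (M k) (μ k)) :
    entryIntegral (fun y => chainProd d (fun k => M k (y k)) (Fin.last m)) (Measure.pi μ)
      = chainProd d (fun k => entryIntegral (M k) (μ k)) (Fin.last m) := by
  induction m with
  | zero =>
    have : ∀ k, IsProbabilityMeasure (μ k) := fun k => k.elim0
    ext i j
    simp [entryIntegral, Fin.last]
  | succ m ih =>
    ext i j
    have hM' (k : Fin m) : EntryIntegrable (M k.succ) (μ k.succ) := hM k.succ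
    have htail := congrFun₂ (ih (fun k => d k.succ) (fun k => M k.succ) (fun k => μ k.succ) hM')
    rw [entryIntegral, of_apply, integral_pi_eq_integral_prod_cons, chainProd_last_succ_apply]
    simp only [chainProd_last_succ_apply, Fin.cons_zero, Fin.cons_succ]
    refine (integral_finsetSum _ fun l _ => (hM 0 i l).mul_prod
      (entryIntegrable_chainProd (fun k => d k.succ) _ _ hM' l j)).trans
      (Finset.sum_congr rfl fun l _ => ?_)
    exact (integral_prod_mul (fun x => M 0 x i l) (fun y : Fin m → X => chainProd
      (fun k => d k.succ) (fun k => M k.succ (y k)) (Fin.last m) l j)).trans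
      (congrArg (_ * ·) (htail l j))

end ChainIntegral

section MatrixExponential
variable {ι κ : Type*} [Fintype ι] [DecidableEq ι]

lemma hasDerivAt_exp_smul_mul_apply (A : Matrix ι ι ℝ) (C : Matrix ι κ ℝ) (i : ι) (j : κ)
    (t : ℝ) :
    HasDerivAt (fun u : ℝ => (NormedSpace.exp (u • A) * C) i j)
      ((NormedSpace.exp (t • A) * A * C) i j) t := by
  -- Any algebra norm will do: the entries of a matrix do not depend on it.
  let : NormedRing (Matrix ι ι ℝ) := Matrix.linftyOpNormedRing
  let : NormedAlgebra ℝ (Matrix ι ι ℝ) := Matrix.linftyOpNormedAlgebra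
  let L : Matrix ι ι ℝ →ₗ[ℝ] ℝ :=
    { toFun := fun X => (X * C) i j
      map_add' := fun X Y => by simp [Matrix.add_mul]
      map_smul' := fun c X => by simp [Matrix.smul_mul] }
  exact L.toContinuousLinearMap.hasFDerivAt.comp_hasDerivAt t (hasDerivAt_exp_smul_const A t)

lemma hasDerivAt_exp_smul_apply (A : Matrix ι ι ℝ) (i j : ι) (t : ℝ) :
    HasDerivAt (fun u : ℝ => NormedSpace.exp (u • A) i j)
      ((NormedSpace.exp (t • A) * A) i j) t := by
  simpa using hasDerivAt_exp_smul_mul_apply A 1 i j t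

lemma integrableOn_exp_smul_apply {A : Matrix ι ι ℝ} (hA : IsUnit A.det)
    (hdecay : ∀ i j, Tendsto (fun t : ℝ => NormedSpace.exp (t • A) i j) atTop (𝓝 0))
    (hnn : ∀ t : ℝ, 0 ≤ t → ∀ i j, 0 ≤ NormedSpace.exp (t • A) i j) (i j : ι) :
    IntegrableOn (fun t : ℝ => NormedSpace.exp (t • A) i j) (Ioi 0) := by
  have hlim : Tendsto (fun t : ℝ => (NormedSpace.exp (t • A) * A⁻¹) i j) atTop (𝓝 0) := by
    simpa [Matrix.mul_apply] using
      tendsto_finsetSum Finset.univ fun l _ => (hdecay i l).mul_const (A⁻¹ l j)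
  refine integrableOn_Ioi_deriv_of_nonneg' (fun t _ => ?_) (fun t ht => hnn t ht.le i j) hlim
  simpa [Matrix.mul_assoc, Matrix.mul_nonsing_inv A hA] using
    hasDerivAt_exp_smul_mul_apply A A⁻¹ i j t

lemma entryIntegral_exp_smul {B : Matrix ι ι ℝ}
    (hint : EntryIntegrable (fun t : ℝ => NormedSpace.exp (t • B)) (volume.restrict (Ioi 0)))
    (hdecay : ∀ i j, Tendsto (fun t : ℝ => NormedSpace.exp (t • B) i j) atTop (𝓝 0)) :
    entryIntegral (fun t : ℝ => NormedSpace.exp (t • B)) (volume.restrict (Ioi 0))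
      = (-B)⁻¹ := by
  have hderiv : entryIntegral (fun t : ℝ => NormedSpace.exp (t • B) * B)
      (volume.restrict (Ioi 0)) = -1 := by
    ext i j
    rw [entryIntegral, of_apply, integral_Ioi_of_hasDerivAt_of_tendsto'
      (fun t _ => hasDerivAt_exp_smul_apply B i j t) (hint.mul_const B i j) (hdecay i j)]
    simp
  refine (inv_eq_left_inv ?_).symm
  rw [Matrix.mul_neg, ← entryIntegral_mul_const hint, hderiv, neg_neg]

end MatrixExponential

section ShiftedExponential
variable {ι : Type*} [Fintype ι] [DecidableEq ι] (A : Matrix ι ι ℝ)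

lemma exp_smul_sub_smul_one (θ t : ℝ) :
    NormedSpace.exp (t • (A - θ • 1))
      = Real.exp (-(θ * t)) • NormedSpace.exp (t • A) := by
  have hsplit : t • (A - θ • 1) = t • A + (-(θ * t)) • (1 : Matrix ι ι ℝ) := by
    rw [smul_sub, smul_smul, sub_eq_add_neg, ← neg_smul, mul_comm t θ]
  have hscalar : NormedSpace.exp ((-(θ * t)) • (1 : Matrix ι ι ℝ))
      = Real.exp (-(θ * t)) • (1 : Matrix ι ι ℝ) := by
    rw [smul_one_eq_diagonal, exp_diagonal, smul_one_eq_diagonal, Pi.exp_def,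
      Real.exp_eq_exp_ℝ]
  rw [hsplit, exp_add_of_commute _ _ ((Commute.one_right _).smul_right _), hscalar,
    Matrix.mul_smul, Matrix.mul_one]

variable {A} {θ : ℝ}

lemma entryIntegrable_exp_smul_sub_smul_one (hA : IsUnit A.det)
    (hdecay : ∀ i j, Tendsto (fun t : ℝ => NormedSpace.exp (t • A) i j) atTop (𝓝 0))
    (hnn : ∀ t : ℝ, 0 ≤ t → ∀ i j, 0 ≤ NormedSpace.exp (t • A) i j) (hθ : 0 ≤ θ) :
    EntryIntegrable (fun t : ℝ => NormedSpace.exp (t • (A - θ • 1)))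
      (volume.restrict (Ioi 0)) := by
  intro i j
  simp only [exp_smul_sub_smul_one, Matrix.smul_apply, smul_eq_mul]
  refine (integrableOn_exp_smul_apply hA hdecay hnn i j).bdd_mul (c := 1)
    (by fun_prop) ((ae_restrict_iff' measurableSet_Ioi).2 (ae_of_all _ fun t ht => ?_))
  rw [Real.norm_eq_abs, abs_of_pos (Real.exp_pos _), Real.exp_le_one_iff, neg_nonpos]
  exact mul_nonneg hθ (mem_Ioi.1 ht).le

lemma tendsto_exp_smul_sub_smul_one_apply
    (hdecay : ∀ i j, Tendsto (fun t : ℝ => NormedSpace.exp (t • A) i j) atTop (𝓝 0))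
    (hθ : 0 ≤ θ) (i j : ι) :
    Tendsto (fun t : ℝ => NormedSpace.exp (t • (A - θ • 1)) i j) atTop (𝓝 0) := by
  refine squeeze_zero_norm' ?_ (by simpa using (hdecay i j).norm)
  filter_upwards [eventually_ge_atTop 0] with t ht
  rw [exp_smul_sub_smul_one, Matrix.smul_apply, smul_eq_mul, norm_mul, Real.norm_eq_abs,
    abs_of_pos (Real.exp_pos _)]
  refine mul_le_of_le_one_left (norm_nonneg _) ?_
  rw [Real.exp_le_one_iff, neg_nonpos]
  exact mul_nonneg hθ ht

lemma entryIntegral_exp_smul_sub_smul_one (hA : IsUnit A.det)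
    (hdecay : ∀ i j, Tendsto (fun t : ℝ => NormedSpace.exp (t • A) i j) atTop (𝓝 0))
    (hnn : ∀ t : ℝ, 0 ≤ t → ∀ i j, 0 ≤ NormedSpace.exp (t • A) i j) (hθ : 0 ≤ θ) :
    entryIntegral (fun t : ℝ => NormedSpace.exp (t • (A - θ • 1))) (volume.restrict (Ioi 0))
      = (θ • 1 - A)⁻¹ := by
  rw [entryIntegral_exp_smul (entryIntegrable_exp_smul_sub_smul_one hA hdecay hnn hθ)
    (tendsto_exp_smul_sub_smul_one_apply hdecay hθ), neg_sub]

end ShiftedExponential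

theorem stmt_3_general (n : ℕ) (d : Fin (n + 2) → ℕ)
    (A : (k : Fin (n + 1)) → Matrix (Fin (d k.castSucc)) (Fin (d k.castSucc)) ℝ)
    (D : (k : Fin (n + 1)) → Matrix (Fin (d k.castSucc)) (Fin (d k.succ)) ℝ)
    (α : Fin (d 0) → ℝ)
    (hAinv : ∀ k, IsUnit (A k).det)
    (hAdecay : ∀ k, ∀ i j, Tendsto (fun t : ℝ => (NormedSpace.exp (t • A k)) i j) atTop (nhds 0))
    (hAnn : ∀ k, ∀ t : ℝ, 0 ≤ t → ∀ i j, 0 ≤ (NormedSpace.exp (t • A k)) i j)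
    (θ : Fin (n + 1) → ℝ) (hθ : ∀ k, 0 ≤ θ k) :
    (∫ y in Set.univ.pi (fun _ : Fin (n + 1) => Set.Ioi (0 : ℝ)),
        Real.exp (-(∑ i, θ i * y i)) *
          ((chainRow d (fun k => NormedSpace.exp (y k • A k) * D k) α (Fin.last (n + 1))) ⬝ᵥ
            (fun _ => (1 : ℝ))))
      = (chainRow d (fun k => (θ k • (1 : Matrix (Fin (d k.castSucc)) (Fin (d k.castSucc)) ℝ) - A k)⁻¹ * D k)
          α (Fin.last (n + 1))) ⬝ᵥ (fun _ => (1 : ℝ)) := by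
  let M k (t : ℝ) := NormedSpace.exp (t • (A k - θ k • 1)) * D k
  have hexp k := entryIntegrable_exp_smul_sub_smul_one (hAinv k) (hAdecay k) (hAnn k) (hθ k)
  have hM k : EntryIntegrable (M k) (volume.restrict (Ioi 0)) := (hexp k).mul_const _
  have hlaplace k :
      entryIntegral (M k) (volume.restrict (Ioi 0)) = (θ k • 1 - A k)⁻¹ * D k := by
    rw [entryIntegral_mul_const (hexp k),
      entryIntegral_exp_smul_sub_smul_one (hAinv k) (hAdecay k) (hAnn k) (hθ k)]
  have hintegrand (y : Fin (n + 1) → ℝ) :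
      Real.exp (-(∑ i, θ i * y i)) *
        (chainRow d (fun k => NormedSpace.exp (y k • A k) * D k) α (Fin.last (n + 1)) ⬝ᵥ
          fun _ => 1)
      = (α ᵥ* chainProd d (fun k => M k (y k)) (Fin.last (n + 1))) ⬝ᵥ fun _ => 1 := by
    simp only [M, exp_smul_sub_smul_one, Matrix.smul_mul, chainProd_last_smul,
      chainRow_eq_vecMul_chainProd, vecMul_smul, smul_dotProduct, smul_eq_mul, ← Real.exp_sum,
      Finset.sum_neg_distrib]
  rw [volume_pi, Measure.restrict_pi_pi]
  simp_rw [hintegrand]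
  rw [integral_vecMul_dotProduct (entryIntegrable_chainProd d M _ hM),
    entryIntegral_chainProd d M _ hM, chainRow_eq_vecMul_chainProd]
  simp only [hlaplace]

/-- Joint Laplace transform of the sequential multivariate phase-type density:
`∫ e^{−θ·y} f(y) dy = α (θ₁I−A₁)^{−1} D₁ (θ₂I−A₂)^{−1} D₂ ⋯ (θₙI−Aₙ)^{−1} Dₙ 𝟏`
for all `θₖ ≥ 0`. -/
theorem stmt_3 (n : ℕ) (d : Fin (n + 2) → ℕ)
    (A : (k : Fin (n + 1)) → Matrix (Fin (d k.castSucc)) (Fin (d k.castSucc)) ℝ)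
    (D : (k : Fin (n + 1)) → Matrix (Fin (d k.castSucc)) (Fin (d k.succ)) ℝ)
    (α : Fin (d 0) → ℝ)
    (hα : ∀ i, 0 ≤ α i) (hα1 : α ⬝ᵥ (fun _ => (1 : ℝ)) = 1)
    (hAinv : ∀ k, IsUnit (A k).det)
    (hAdecay : ∀ k, ∀ i j, Tendsto (fun t : ℝ => (NormedSpace.exp (t • A k)) i j) atTop (nhds 0))
    (hAnn : ∀ k, ∀ t : ℝ, 0 ≤ t → ∀ i j, 0 ≤ (NormedSpace.exp (t • A k)) i j)
    (hDnn : ∀ k, ∀ i j, 0 ≤ D k i j)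
    (hDlast : D (Fin.last n) *ᵥ (fun _ => (1 : ℝ)) = -(A (Fin.last n) *ᵥ (fun _ => (1 : ℝ))))
    (θ : Fin (n + 1) → ℝ) (hθ : ∀ k, 0 ≤ θ k) :
    (∫ y in Set.univ.pi (fun _ : Fin (n + 1) => Set.Ioi (0 : ℝ)),
        Real.exp (-(∑ i, θ i * y i)) *
          ((chainRow d (fun k => NormedSpace.exp (y k • A k) * D k) α (Fin.last (n + 1))) ⬝ᵥ
            (fun _ => (1 : ℝ))))
      = (chainRow d (fun k => (θ k • (1 : Matrix (Fin (d k.castSucc)) (Fin (d k.castSucc)) ℝ) - A k)⁻¹ * D k)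
          α (Fin.last (n + 1))) ⬝ᵥ (fun _ => (1 : ℝ)) :=
  stmt_3_general n d A D α hAinv hAdecay hAnn θ hθ
end

section
/- Under the sequential multivariate phase-type model, the marginal density of Y_k is f_{Y_k}(t) = γ_k·exp(A_k t)·(−A_k𝟏), where γ_k = α(−A₁)^{−1}D₁(−A₂)^{−1}D₂ ⋯ (−A_{k−1})^{−1}D_{k−1}; that is, Y_k ~ PH(γ_k, A_k). -/
/-!
Expanding the row vector `α e^{A₁y₁} D₁ ⋯ e^{Aₙyₙ} Dₙ` along index paths turns the joint density
into a finite sum of products of functions of the single coordinates, so by Fubini integrating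
out `y_m` replaces the factor `e^{A_m y_m} D_m` by `∫₀^∞ e^{A_m s} ds · D_m = (-A_m)⁻¹ D_m`.
For `m > k` these factors fix `𝟏` because `D_m 𝟏 = -A_m 𝟏`, so the chain telescopes down to
`γ_k e^{A_k t} D_k 𝟏 = γ_k e^{A_k t} (-A_k 𝟏)`.
-/

open Matrix MeasureTheory Filter

open Set

section ChainRow

variable {n : ℕ}

theorem chainRow_succ_s7 (d : Fin (n + 1) → ℕ)
    (M : (m : Fin n) → Matrix (Fin (d m.castSucc)) (Fin (d m.succ)) ℝ) (v : Fin (d 0) → ℝ)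
    (j : Fin n) :
    chainRow d M v j.succ = chainRow d M v j.castSucc ᵥ* M j := rfl

theorem chainRow_succ_eq_chainRow_tail (d : Fin (n + 2) → ℕ)
    (M : (m : Fin (n + 1)) → Matrix (Fin (d m.castSucc)) (Fin (d m.succ)) ℝ)
    (v : Fin (d 0) → ℝ) (j : Fin (n + 1)) :
    chainRow d M v j.succ = chainRow (fun m => d m.succ) (fun m => M m.succ) (v ᵥ* M 0) j := by
  induction j using Fin.induction with
  | zero => rfl
  | succ j ih => exact congrArg (· ᵥ* M j.succ) ih

theorem chainRow_last_dotProduct (d : Fin (n + 1) → ℕ)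
    (M : (m : Fin n) → Matrix (Fin (d m.castSucc)) (Fin (d m.succ)) ℝ)
    (v : Fin (d 0) → ℝ) (w : Fin (d (Fin.last n)) → ℝ) :
    chainRow d M v (Fin.last n) ⬝ᵥ w
      = ∑ x : (∀ m : Fin (n + 1), Fin (d m)),
          v (x 0) * (∏ m : Fin n, M m (x m.castSucc) (x m.succ)) * w (x (Fin.last n)) := by
  induction n with
  | zero =>
    change v ⬝ᵥ w = _
    rw [← (Equiv.piUnique fun m : Fin 1 => Fin (d m)).symm.sum_comp]
    simp [dotProduct, Equiv.piUnique, uniqueElim]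
  | succ n ih =>
    change chainRow d M v (Fin.last n).succ ⬝ᵥ w = _
    rw [chainRow_succ_eq_chainRow_tail, ih,
      ← (Fin.consEquiv fun m : Fin (n + 2) => Fin (d m)).sum_comp, Fintype.sum_prod_type]
    simp only [vecMul, dotProduct, Finset.sum_mul]
    rw [Finset.sum_comm]
    refine Finset.sum_congr rfl fun x _ => Finset.sum_congr rfl fun y _ => ?_
    simp only [Fin.consEquiv, Equiv.coe_fn_mk, Fin.prod_univ_succ, Fin.cons_zero, Fin.cons_succ,
      ← Fin.succ_castSucc, Fin.castSucc_zero, ← Fin.succ_last]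
    ring

theorem chainRow_congr (d : Fin (n + 1) → ℕ)
    (M M' : (m : Fin n) → Matrix (Fin (d m.castSucc)) (Fin (d m.succ)) ℝ)
    (v : Fin (d 0) → ℝ) (j : Fin (n + 1)) (h : ∀ m : Fin n, m.castSucc < j → M m = M' m) :
    chainRow d M v j = chainRow d M' v j := by
  induction j using Fin.induction with
  | zero => rfl
  | succ j ih =>
    rw [chainRow_succ_s7, chainRow_succ_s7, h j Fin.castSucc_lt_succ,
      ih fun m hm => h m (hm.trans Fin.castSucc_lt_succ)]

theorem chainRow_dotProduct_eq_of_mulVec (d : Fin (n + 1) → ℕ)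
    (M : (m : Fin n) → Matrix (Fin (d m.castSucc)) (Fin (d m.succ)) ℝ)
    (v : Fin (d 0) → ℝ) (u : (m : Fin (n + 1)) → Fin (d m) → ℝ) (j : Fin (n + 1))
    (hM : ∀ m : Fin n, j ≤ m.castSucc → M m *ᵥ u m.succ = u m.castSucc) (i : Fin (n + 1))
    (hji : j ≤ i) :
    chainRow d M v i ⬝ᵥ u i = chainRow d M v j ⬝ᵥ u j := by
  induction i using Fin.induction with
  | zero => rw [Fin.le_zero_iff.mp hji]
  | succ i ih =>
    rcases hji.lt_or_eq with hlt | rfl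
    · have hj : j ≤ i.castSucc := Fin.le_castSucc_iff.2 hlt
      rw [chainRow_succ_s7, ← dotProduct_mulVec, hM i hj, ih hj]
    · rfl

end ChainRow

theorem setIntegral_pi_Ioi_chainRow_dotProduct {n : ℕ} (d : Fin (n + 1) → ℕ)
    (p : Fin n → Prop) [DecidablePred p]
    (F : (m : Fin n) → ℝ → Matrix (Fin (d m.castSucc)) (Fin (d m.succ)) ℝ)
    (I C : (m : Fin n) → Matrix (Fin (d m.castSucc)) (Fin (d m.succ)) ℝ)
    (hF : ∀ m, p m → ∀ i j, IntegrableOn (fun s => F m s i j) (Ioi 0))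
    (hI : ∀ m, p m → ∀ i j, ∫ s in Ioi (0 : ℝ), F m s i j = I m i j)
    (v : Fin (d 0) → ℝ) (w : Fin (d (Fin.last n)) → ℝ) :
    ∫ g in univ.pi (fun _ : {m // p m} => Ioi (0 : ℝ)),
        chainRow d (fun m => if h : p m then F m (g ⟨m, h⟩) else C m) v (Fin.last n) ⬝ᵥ w
      = chainRow d (fun m => if p m then I m else C m) v (Fin.last n) ⬝ᵥ w := by
  set c : (∀ m : Fin (n + 1), Fin (d m)) → ℝ := fun x =>
    v (x 0) * (∏ m : {m // ¬ p m}, C m (x m.1.castSucc) (x m.1.succ)) * w (x (Fin.last n))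
  have hsplit : ∀ (x : ∀ m : Fin (n + 1), Fin (d m))
      (M : (m : Fin n) → Matrix (Fin (d m.castSucc)) (Fin (d m.succ)) ℝ),
      (∀ m, ¬ p m → M m = C m) →
      v (x 0) * (∏ m, M m (x m.castSucc) (x m.succ)) * w (x (Fin.last n))
        = c x * ∏ m : {m // p m}, M m (x m.1.castSucc) (x m.1.succ) := by
    intro x M hM
    rw [← Fintype.prod_subtype_mul_prod_subtype p]
    simp only [c, fun m : {m // ¬ p m} => hM m m.2]
    ring
  have hfree : ∀ (g : {m // p m} → ℝ) (m : {m // p m}),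
      (if h : p m then F m (g ⟨m, h⟩) else C m) = F m (g m) := fun g m => dif_pos m.2
  have hfixed : ∀ m : {m // p m}, (if p m then I m else C m) = I m := fun m => if_pos m.2
  rw [volume_pi, Measure.restrict_pi_pi]
  simp only [chainRow_last_dotProduct, hsplit _ _ fun m hm => dif_neg hm,
    hsplit _ _ fun m hm => if_neg hm, hfree, hfixed]
  rw [integral_finsetSum _ fun x _ =>
    (Integrable.fintype_prod fun m : {m // p m} => hF m m.2 _ _).const_mul _]
  refine Finset.sum_congr rfl fun x _ => ?_
  rw [integral_const_mul,
    integral_fintype_prod_eq_prod fun (m : {m // p m}) s => F m s (x m.1.castSucc) (x m.1.succ)]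
  simp only [fun m : {m // p m} => hI m m.2]

section MatrixExp

variable {ι κ : Type*} [Fintype ι] [DecidableEq ι] {A : Matrix ι ι ℝ}

theorem inv_neg_of_isUnit_det (hA : IsUnit A.det) : (-A)⁻¹ = -A⁻¹ :=
  inv_eq_right_inv (by rw [Matrix.mul_neg, Matrix.neg_mul, neg_neg, mul_nonsing_inv A hA])

theorem inv_neg_mul_mulVec_eq [Fintype κ] {D : Matrix ι κ ℝ} {u : ι → ℝ} {w : κ → ℝ}
    (hA : IsUnit A.det) (hD : D *ᵥ w = -(A *ᵥ u)) :
    ((-A)⁻¹ * D) *ᵥ w = u := by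
  rw [← mulVec_mulVec, hD, inv_neg_of_isUnit_det hA, neg_mulVec, mulVec_neg, neg_neg,
    mulVec_mulVec, nonsing_inv_mul A hA, one_mulVec]

-- Only needed to differentiate `exp`; no statement below depends on the choice of norm.
attribute [local instance] Matrix.linftyOpNormedRing Matrix.linftyOpNormedAlgebra

theorem hasDerivAt_exp_smul_mul_inv_apply (hA : IsUnit A.det) (i j : ι) (s : ℝ) :
    HasDerivAt (fun u : ℝ => (NormedSpace.exp (u • A) * A⁻¹) i j)
      (NormedSpace.exp (s • A) i j) s := by
  have h := (LinearMap.toContinuousLinearMap (entryLinearMap ℝ ℝ i j)).hasFDerivAt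
    |>.comp_hasDerivAt s ((hasDerivAt_exp_smul_const A s).mul_const A⁻¹)
  rwa [Matrix.mul_assoc, mul_nonsing_inv A hA, Matrix.mul_one] at h

theorem tendsto_exp_smul_mul_apply_atTop
    (hdecay : ∀ i j, Tendsto (fun s : ℝ => NormedSpace.exp (s • A) i j) atTop (nhds 0))
    (B : Matrix ι κ ℝ) (i : ι) (j : κ) :
    Tendsto (fun s : ℝ => (NormedSpace.exp (s • A) * B) i j) atTop (nhds 0) := by
  simpa [Matrix.mul_apply] using
    tendsto_finsetSum Finset.univ fun q _ => (hdecay i q).mul_const (B q j)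

theorem integrableOn_exp_smul_apply_Ioi (hA : IsUnit A.det)
    (hdecay : ∀ i j, Tendsto (fun s : ℝ => NormedSpace.exp (s • A) i j) atTop (nhds 0))
    (hnn : ∀ s : ℝ, 0 ≤ s → ∀ i j, 0 ≤ NormedSpace.exp (s • A) i j) (i j : ι) :
    IntegrableOn (fun s : ℝ => NormedSpace.exp (s • A) i j) (Ioi 0) :=
  integrableOn_Ioi_deriv_of_nonneg' (fun s _ => hasDerivAt_exp_smul_mul_inv_apply hA i j s)
    (fun s hs => hnn s hs.le i j) (tendsto_exp_smul_mul_apply_atTop hdecay _ i j)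

theorem integral_exp_smul_apply_Ioi (hA : IsUnit A.det)
    (hdecay : ∀ i j, Tendsto (fun s : ℝ => NormedSpace.exp (s • A) i j) atTop (nhds 0))
    (hnn : ∀ s : ℝ, 0 ≤ s → ∀ i j, 0 ≤ NormedSpace.exp (s • A) i j) (i j : ι) :
    ∫ s in Ioi (0 : ℝ), NormedSpace.exp (s • A) i j = (-A)⁻¹ i j := by
  rw [integral_Ioi_of_hasDerivAt_of_nonneg'
      (fun s _ => hasDerivAt_exp_smul_mul_inv_apply hA i j s)
      (fun s hs => hnn s hs.le i j) (tendsto_exp_smul_mul_apply_atTop hdecay _ i j),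
    zero_smul, NormedSpace.exp_zero, Matrix.one_mul, zero_sub, inv_neg_of_isUnit_det hA,
    Matrix.neg_apply]

theorem integrableOn_exp_smul_mul_apply_Ioi (hA : IsUnit A.det)
    (hdecay : ∀ i j, Tendsto (fun s : ℝ => NormedSpace.exp (s • A) i j) atTop (nhds 0))
    (hnn : ∀ s : ℝ, 0 ≤ s → ∀ i j, 0 ≤ NormedSpace.exp (s • A) i j)
    [Fintype κ] (B : Matrix ι κ ℝ) (i : ι) (j : κ) :
    IntegrableOn (fun s : ℝ => (NormedSpace.exp (s • A) * B) i j) (Ioi 0) := by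
  simp only [Matrix.mul_apply]
  exact integrable_finsetSum _ fun q _ =>
    (integrableOn_exp_smul_apply_Ioi hA hdecay hnn i q).mul_const _

theorem integral_exp_smul_mul_apply_Ioi (hA : IsUnit A.det)
    (hdecay : ∀ i j, Tendsto (fun s : ℝ => NormedSpace.exp (s • A) i j) atTop (nhds 0))
    (hnn : ∀ s : ℝ, 0 ≤ s → ∀ i j, 0 ≤ NormedSpace.exp (s • A) i j)
    [Fintype κ] (B : Matrix ι κ ℝ) (i : ι) (j : κ) :
    ∫ s in Ioi (0 : ℝ), (NormedSpace.exp (s • A) * B) i j = ((-A)⁻¹ * B) i j := by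
  simp only [Matrix.mul_apply]
  rw [integral_finsetSum _ fun q _ =>
    (integrableOn_exp_smul_apply_Ioi hA hdecay hnn i q).mul_const _]
  simp only [integral_mul_const, integral_exp_smul_apply_Ioi hA hdecay hnn]

end MatrixExp

theorem stmt_7_general (n : ℕ) (d : Fin (n + 2) → ℕ)
    (A : (k : Fin (n + 1)) → Matrix (Fin (d k.castSucc)) (Fin (d k.castSucc)) ℝ)
    (D : (k : Fin (n + 1)) → Matrix (Fin (d k.castSucc)) (Fin (d k.succ)) ℝ)
    (α : Fin (d 0) → ℝ)
    (hAinv : ∀ k, IsUnit (A k).det)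
    (hAdecay : ∀ k, ∀ i j, Tendsto (fun s : ℝ => (NormedSpace.exp (s • A k)) i j) atTop (nhds 0))
    (hAnn : ∀ k, ∀ s : ℝ, 0 ≤ s → ∀ i j, 0 ≤ (NormedSpace.exp (s • A k)) i j)
    (hD : ∀ k, D k *ᵥ (fun _ => (1 : ℝ)) = -(A k *ᵥ (fun _ => (1 : ℝ))))
    (k : Fin (n + 1)) (t : ℝ) :
    (∫ g in Set.univ.pi (fun _ : {i : Fin (n + 1) // i ≠ k} => Set.Ioi (0 : ℝ)),
        ((chainRow d
            (fun m => NormedSpace.exp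
              ((if h : m = k then t else g ⟨m, h⟩) • A m) * D m)
            α (Fin.last (n + 1))) ⬝ᵥ (fun _ => (1 : ℝ))))
      = ((chainRow d (fun m => (-(A m))⁻¹ * D m) α k.castSucc) ᵥ*
          NormedSpace.exp (t • A k)) ⬝ᵥ (-(A k *ᵥ (fun _ => (1 : ℝ)))) := by
  have hintegrand : ∀ g : {i // i ≠ k} → ℝ,
      (fun m => NormedSpace.exp ((if h : m = k then t else g ⟨m, h⟩) • A m) * D m)
        = fun m => if h : m ≠ k then NormedSpace.exp (g ⟨m, h⟩ • A m) * D m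
          else NormedSpace.exp (t • A m) * D m := by
    intro g; funext m
    by_cases h : m = k
    · subst h; simp
    · simp [h]
  have hfixOne : ∀ m, k.succ ≤ m.castSucc →
      (if m ≠ k then (-(A m))⁻¹ * D m else NormedSpace.exp (t • A m) * D m) *ᵥ (fun _ => 1)
        = fun _ => 1 := fun m hm => by
    rw [if_pos (Fin.succ_le_castSucc_iff.1 hm).ne']
    exact inv_neg_mul_mulVec_eq (hAinv m) (hD m)
  simp only [hintegrand]
  rw [setIntegral_pi_Ioi_chainRow_dotProduct d (· ≠ k)
      (fun m s => NormedSpace.exp (s • A m) * D m) (fun m => (-(A m))⁻¹ * D m) _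
      (fun m _ => integrableOn_exp_smul_mul_apply_Ioi (hAinv m) (hAdecay m) (hAnn m) (D m))
      (fun m _ => integral_exp_smul_mul_apply_Ioi (hAinv m) (hAdecay m) (hAnn m) (D m)),
    chainRow_dotProduct_eq_of_mulVec d _ α (fun _ _ => 1) k.succ hfixOne _ (Fin.le_last _),
    chainRow_succ_s7, if_neg (not_not.2 rfl),
    chainRow_congr d _ (fun m => (-(A m))⁻¹ * D m) α k.castSucc
      fun m hm => if_pos (Fin.castSucc_lt_castSucc_iff.1 hm).ne,
    ← vecMul_vecMul, ← dotProduct_mulVec (v := _ ᵥ* _), hD k]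

/-- Marginal density of `Y_k` under the sequential multivariate phase-type model:
integrating the joint density `f(y₁,…,yₙ) = α exp(A₁y₁) D₁ ⋯ exp(Aₙyₙ) Dₙ 𝟏` over all
coordinates other than the `k`-th (with the `k`-th coordinate fixed at `t ≥ 0`) yields
`γ_k exp(A_k t)(−A_k 𝟏)`, where `γ_k = α (−A₁)^{−1} D₁ ⋯ (−A_{k−1})^{−1} D_{k−1}`;
that is, `Y_k ∼ PH(γ_k, A_k)`. -/
theorem stmt_7 (n : ℕ) (d : Fin (n + 2) → ℕ)
    (A : (k : Fin (n + 1)) → Matrix (Fin (d k.castSucc)) (Fin (d k.castSucc)) ℝ)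
    (D : (k : Fin (n + 1)) → Matrix (Fin (d k.castSucc)) (Fin (d k.succ)) ℝ)
    (α : Fin (d 0) → ℝ)
    (hα : ∀ i, 0 ≤ α i) (hα1 : α ⬝ᵥ (fun _ => (1 : ℝ)) = 1)
    (hAinv : ∀ k, IsUnit (A k).det)
    (hAdecay : ∀ k, ∀ i j, Tendsto (fun s : ℝ => (NormedSpace.exp (s • A k)) i j) atTop (nhds 0))
    (hAnn : ∀ k, ∀ s : ℝ, 0 ≤ s → ∀ i j, 0 ≤ (NormedSpace.exp (s • A k)) i j)
    (hDnn : ∀ k, ∀ i j, 0 ≤ D k i j)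
    (hD : ∀ k, D k *ᵥ (fun _ => (1 : ℝ)) = -(A k *ᵥ (fun _ => (1 : ℝ))))
    (k : Fin (n + 1)) (t : ℝ) (ht : 0 ≤ t) :
    (∫ g in Set.univ.pi (fun _ : {i : Fin (n + 1) // i ≠ k} => Set.Ioi (0 : ℝ)),
        ((chainRow d
            (fun m => NormedSpace.exp
              ((if h : m = k then t else g ⟨m, h⟩) • A m) * D m)
            α (Fin.last (n + 1))) ⬝ᵥ (fun _ => (1 : ℝ))))
      = ((chainRow d (fun m => (-(A m))⁻¹ * D m) α k.castSucc) ᵥ*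
          NormedSpace.exp (t • A k)) ⬝ᵥ (-(A k *ᵥ (fun _ => (1 : ℝ)))) :=
  stmt_7_general n d A D α hAinv hAdecay hAnn hD k t
end
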